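/- Let n be a positive even integer and let (ε_i')_{i ≥ 1} be a sequence of i.i.d. Rademacher random variables (P(ε_i' = 1) = P(ε_i' = -1) = 1/2). Define the stopping time T as the first time t at which max( Σ_{i=1}^t 1_{ε_i' = 1}, Σ_{i=1}^t 1_{ε_i' = -1} ) = n/2. Then for every integer δ with 0 ≤ δ < n, P( T ≤ n - δ ) ≤ 2 e^{-δ²/(2(n-δ))}. -/

import Mathlib

/-!
If `T ≤ m := n - δ`, then at time `m` one of the two counts has already reached `n / 2`. The
counts add up to `m` and their difference is the walk `S_m = ε'_1 + ⋯ + ε'_m`, so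
`|S_m| ≥ 2 · (n / 2) - m = δ`, as `n` is even. A Rademacher variable is centred and bounded
by `1`, hence sub-Gaussian with parameter `1` by Hoeffding's lemma, and Hoeffding's inequality
applied to both tails of `S_m` gives the bound `2 exp (-δ² / (2m))`.
-/

open MeasureTheory ProbabilityTheory Finset
open scoped NNReal

noncomputable def valueCount (g : ℕ → ℝ) (a : ℝ) (t : ℕ) : ℕ := #{i ∈ Icc 1 t | g i = a}

section HittingTime

variable (g : ℕ → ℝ)

lemma Nat.exists_eq_of_le_of_le_add_one {f : ℕ → ℕ} (hstep : ∀ t, f (t + 1) ≤ f t + 1)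
    {N c : ℕ} (h0 : f 0 ≤ c) (hN : c ≤ f N) : ∃ t, f t = c := by
  induction N with
  | zero => exact ⟨0, by omega⟩
  | succ N ih =>
    by_cases h : c ≤ f N
    · exact ih h
    · exact ⟨N + 1, by have := hstep N; omega⟩

lemma valueCount_mono (a : ℝ) : Monotone (valueCount g a) := fun _ _ hst =>
  card_le_card (filter_subset_filter _ (Icc_subset_Icc_right hst))

lemma valueCount_add_one_le (a : ℝ) (t : ℕ) : valueCount g a (t + 1) ≤ valueCount g a t + 1 := by
  rw [valueCount, ← insert_Icc_right_eq_Icc_add_one (by omega), filter_insert]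
  split_ifs
  · exact card_insert_le _ _
  · exact Nat.le_succ _

variable {g}

lemma sum_eq_valueCount_sub_valueCount {t : ℕ} (hg : ∀ i ∈ Icc 1 t, g i = 1 ∨ g i = -1) :
    ∑ i ∈ Icc 1 t, g i = valueCount g 1 t - valueCount g (-1) t := by
  rw [valueCount, valueCount, ← sum_boole, ← sum_boole, ← sum_sub_distrib]
  refine sum_congr rfl fun i hi => ?_
  rcases hg i hi with h | h <;> norm_num [h]

lemma valueCount_add_valueCount {t : ℕ} (hg : ∀ i ∈ Icc 1 t, g i = 1 ∨ g i = -1) :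
    valueCount g 1 t + valueCount g (-1) t = t := by
  have hcast : ((valueCount g 1 t + valueCount g (-1) t : ℕ) : ℝ) = t := by
    rw [valueCount, valueCount, Nat.cast_add, ← sum_boole, ← sum_boole, ← sum_add_distrib]
    calc ∑ i ∈ Icc 1 t, ((if g i = 1 then (1 : ℝ) else 0) + if g i = -1 then 1 else 0)
        = ∑ i ∈ Icc 1 t, (1 : ℝ) := sum_congr rfl fun i hi => by
          rcases hg i hi with h | h <;> norm_num [h]
      _ = t := by simp
  exact_mod_cast hcast

lemma exists_max_valueCount_eq_half {n : ℕ} (hg : ∀ i ∈ Icc 1 n, g i = 1 ∨ g i = -1) :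
    ∃ t, max (valueCount g 1 t) (valueCount g (-1) t) = n / 2 := by
  refine Nat.exists_eq_of_le_of_le_add_one
    (f := fun t => max (valueCount g 1 t) (valueCount g (-1) t)) (N := n)
    (fun t => max_le ?_ ?_) (by simp [valueCount]) ?_
  · exact (valueCount_add_one_le g 1 t).trans (by gcongr; exact le_max_left _ _)
  · exact (valueCount_add_one_le g (-1) t).trans (by gcongr; exact le_max_right _ _)
  · have := valueCount_add_valueCount hg
    omega

lemma le_abs_sum_of_sInf_le {n m δ : ℕ} (hn : Even n) (hmδ : m + δ = n)
    (hg : ∀ i ∈ Icc 1 n, g i = 1 ∨ g i = -1)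
    (hT : sInf {t | max (valueCount g 1 t) (valueCount g (-1) t) = n / 2} ≤ m) :
    (δ : ℝ) ≤ |∑ i ∈ Icc 1 m, g i| := by
  have hgm : ∀ i ∈ Icc 1 m, g i = 1 ∨ g i = -1 :=
    fun i hi => hg i (Icc_subset_Icc_right (by omega) hi)
  have hhit : n / 2 ≤ max (valueCount g 1 m) (valueCount g (-1) m) := by
    rw [← Nat.sInf_mem (exists_max_valueCount_eq_half hg)]
    exact max_le_max (valueCount_mono g 1 hT) (valueCount_mono g (-1) hT)
  have hcount := valueCount_add_valueCount hgm
  have hhalf := Nat.div_mul_cancel hn.two_dvd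
  rw [sum_eq_valueCount_sub_valueCount hgm, le_abs]
  rcases le_max_iff.mp hhit with h | h
  · left
    have : δ + valueCount g (-1) m ≤ valueCount g 1 m := by omega
    rw [le_sub_iff_add_le]; exact_mod_cast this
  · right
    have : δ + valueCount g 1 m ≤ valueCount g (-1) m := by omega
    rw [neg_sub, le_sub_iff_add_le]; exact_mod_cast this

end HittingTime

section Rademacher

variable {Ω : Type*} [MeasurableSpace Ω]

def IsRademacher (Y : Ω → ℝ) (μ : Measure Ω) : Prop :=
  μ {ω | Y ω = 1} = 1 / 2 ∧ μ {ω | Y ω = -1} = 1 / 2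

variable {μ : Measure Ω} [IsProbabilityMeasure μ] {Y : Ω → ℝ}

lemma IsRademacher.ae_eq_one_or_eq_neg_one (hY : Measurable Y) (h : IsRademacher Y μ) :
    ∀ᵐ ω ∂μ, Y ω = 1 ∨ Y ω = -1 := by
  have hA : MeasurableSet {ω | Y ω = 1} := hY (measurableSet_singleton 1)
  have hB : MeasurableSet {ω | Y ω = -1} := hY (measurableSet_singleton (-1))
  have hdisj : Disjoint {ω | Y ω = 1} {ω | Y ω = -1} :=
    Set.disjoint_left.mpr fun ω h1 h2 => by norm_num [Set.mem_ofPred_eq.mp h1] at h2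
  rw [ae_iff, ← Set.compl_ofPred, Set.ofPred_or, measure_compl (hA.union hB) (measure_ne_top _ _),
    measure_union hdisj hB, h.1, h.2, ENNReal.add_halves, measure_univ, tsub_self]

lemma IsRademacher.integral_eq_zero (hY : Measurable Y) (h : IsRademacher Y μ) :
    μ[Y] = 0 := by
  have hA : MeasurableSet {ω | Y ω = 1} := hY (measurableSet_singleton 1)
  have hind : Y =ᵐ[μ] fun ω => 2 * {ω | Y ω = 1}.indicator 1 ω - 1 := by
    filter_upwards [h.ae_eq_one_or_eq_neg_one hY] with ω hω
    rcases hω with hω | hω <;> norm_num [Set.indicator, hω]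
  rw [integral_congr_ae hind, integral_sub (((integrable_const 1).indicator hA).const_mul 2)
    (integrable_const 1), integral_const_mul, integral_indicator_one hA, measureReal_def, h.1]
  norm_num

lemma IsRademacher.hasSubgaussianMGF (hY : Measurable Y) (h : IsRademacher Y μ) :
    HasSubgaussianMGF Y 1 μ := by
  have hparam : (‖(1 : ℝ) - -1‖₊ / 2) ^ 2 = 1 := by ext; norm_num
  simpa only [hparam] using hasSubgaussianMGF_of_mem_Icc_of_integral_eq_zero (a := -1) (b := 1)
    hY.aemeasurable
    ((h.ae_eq_one_or_eq_neg_one hY).mono fun ω hω => by rcases hω with hω | hω <;> norm_num [hω])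
    (h.integral_eq_zero hY)

end Rademacher

lemma measure_abs_sum_ge_le_of_iIndepFun {Ω ι : Type*} [MeasurableSpace Ω] {μ : Measure Ω}
    {X : ι → Ω → ℝ} (h_indep : iIndepFun X μ) {c : ι → ℝ≥0} {s : Finset ι}
    (h_subG : ∀ i ∈ s, HasSubgaussianMGF (X i) (c i) μ) {ε : ℝ} (hε : 0 ≤ ε) :
    μ {ω | ε ≤ |∑ i ∈ s, X i ω|} ≤
      ENNReal.ofReal (2 * Real.exp (-ε ^ 2 / (2 * ∑ i ∈ s, c i))) := by
  have : IsProbabilityMeasure μ := h_indep.isProbabilityMeasure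
  have hsum := HasSubgaussianMGF.sum_of_iIndepFun h_indep h_subG
  have hupper := hsum.measure_ge_le hε
  have hlower := hsum.neg.measure_ge_le hε
  calc μ {ω | ε ≤ |∑ i ∈ s, X i ω|}
      ≤ μ ({ω | ε ≤ ∑ i ∈ s, X i ω} ∪ {ω | ε ≤ -∑ i ∈ s, X i ω}) :=
        measure_mono fun ω (hω : ε ≤ _) => le_abs.mp hω
    _ ≤ μ {ω | ε ≤ ∑ i ∈ s, X i ω} + μ {ω | ε ≤ -∑ i ∈ s, X i ω} := measure_union_le _ _
    _ ≤ ENNReal.ofReal (2 * Real.exp (-ε ^ 2 / (2 * ∑ i ∈ s, c i))) := by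
        rw [two_mul, ENNReal.ofReal_add (by positivity) (by positivity)]
        gcongr <;> rw [← ofReal_measureReal] <;> exact ENNReal.ofReal_le_ofReal ‹_›

theorem stopping_time_control_general
    (Ω : Type) [MeasurableSpace Ω] (μ : Measure Ω) [IsProbabilityMeasure μ]
    (n : ℕ) (hne : Even n)
    (ε' : ℕ → Ω → ℝ)
    (hmeas : ∀ i, Measurable (ε' i))
    -- (ε'_i)_{i ≥ 1} are independent ...
    (hindep : iIndepFun (fun i : {k : ℕ // 1 ≤ k} => ε' i) μ)
    -- ... and each is a Rademacher variable
    (hdist : ∀ i, 1 ≤ i → μ {ω | ε' i ω = 1} = 1 / 2 ∧ μ {ω | ε' i ω = -1} = 1 / 2)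
    (T : Ω → ℕ)
    (hT : ∀ ω, T ω = sInf {t : ℕ |
      max ((Finset.Icc 1 t).filter fun i => ε' i ω = 1).card
          ((Finset.Icc 1 t).filter fun i => ε' i ω = -1).card = n / 2})
    (δ : ℕ) (hδ : δ < n) :
    μ {ω | T ω ≤ n - δ} ≤
      ENNReal.ofReal (2 * Real.exp (-(δ : ℝ) ^ 2 / (2 * ((n : ℝ) - δ)))) := by
  set m := n - δ
  have hrad (i : {k : ℕ // 1 ≤ k}) : IsRademacher (ε' i) μ := hdist i i.2
  let s : Finset {k : ℕ // 1 ≤ k} := (Icc 1 m).subtype (1 ≤ ·)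
  have hsum (ω : Ω) : ∑ i ∈ s, ε' i ω = ∑ i ∈ Icc 1 m, ε' i ω :=
    sum_subtype_of_mem (fun i => ε' i ω) fun i hi => (mem_Icc.mp hi).1
  have hcard : ∑ _i ∈ s, (1 : ℝ≥0) = m := by
    rw [sum_const, card_subtype, filter_true_of_mem fun i hi => (mem_Icc.mp hi).1,
      Nat.card_Icc, add_tsub_cancel_right, nsmul_one]
  have hsigns : ∀ᵐ ω ∂μ, ∀ i : {k : ℕ // 1 ≤ k}, ε' i ω = 1 ∨ ε' i ω = -1 :=
    ae_all_iff.2 fun i => (hrad i).ae_eq_one_or_eq_neg_one (hmeas i)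
  have hT_le : {ω | T ω ≤ m} ≤ᵐ[μ] {ω | (δ : ℝ) ≤ |∑ i ∈ s, ε' i ω|} := by
    filter_upwards [hsigns] with ω hω (hTω : T ω ≤ m)
    show (δ : ℝ) ≤ |_|
    rw [hsum]
    exact le_abs_sum_of_sInf_le hne (by omega) (fun i hi => hω ⟨i, (mem_Icc.mp hi).1⟩)
      ((hT ω).symm.trans_le hTω)
  calc μ {ω | T ω ≤ m}
      ≤ μ {ω | (δ : ℝ) ≤ |∑ i ∈ s, ε' i ω|} := measure_mono_ae hT_le
    _ ≤ ENNReal.ofReal (2 * Real.exp (-(δ : ℝ) ^ 2 / (2 * ∑ _i ∈ s, (1 : ℝ≥0)))) :=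
        measure_abs_sum_ge_le_of_iIndepFun hindep
          (fun i _ => (hrad i).hasSubgaussianMGF (hmeas i)) (Nat.cast_nonneg δ)
    _ = ENNReal.ofReal (2 * Real.exp (-(δ : ℝ) ^ 2 / (2 * ((n : ℝ) - δ)))) := by
        rw [hcard, NNReal.coe_natCast, Nat.cast_sub hδ.le]

/-- **Control of the stopping time `T`.** Let `(ε'_i)_{i ≥ 1}` be i.i.d. Rademacher
variables and, for a positive even integer `n`, let `T` be the first time `t` at which
`max(∑_{i=1}^t 1_{ε'_i = 1}, ∑_{i=1}^t 1_{ε'_i = -1}) = n/2`. Then for every integer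
`0 ≤ δ < n`, `P(T ≤ n - δ) ≤ 2 exp(-δ²/(2(n-δ)))`. -/
theorem stopping_time_control
    (Ω : Type) [MeasurableSpace Ω] (μ : Measure Ω) [IsProbabilityMeasure μ]
    (n : ℕ) (hn : 0 < n) (hne : Even n)
    (ε' : ℕ → Ω → ℝ)
    (hmeas : ∀ i, Measurable (ε' i))
    -- (ε'_i)_{i ≥ 1} are independent ...
    (hindep : iIndepFun (fun i : {k : ℕ // 1 ≤ k} => ε' i) μ)
    -- ... and each is a Rademacher variable
    (hdist : ∀ i, 1 ≤ i → μ {ω | ε' i ω = 1} = 1 / 2 ∧ μ {ω | ε' i ω = -1} = 1 / 2)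
    (T : Ω → ℕ)
    (hT : ∀ ω, T ω = sInf {t : ℕ |
      max ((Finset.Icc 1 t).filter fun i => ε' i ω = 1).card
          ((Finset.Icc 1 t).filter fun i => ε' i ω = -1).card = n / 2})
    (δ : ℕ) (hδ : δ < n) :
    μ {ω | T ω ≤ n - δ} ≤
      ENNReal.ofReal (2 * Real.exp (-(δ : ℝ) ^ 2 / (2 * ((n : ℝ) - δ)))) :=
  stopping_time_control_general Ω μ n hne ε' hmeas hindep hdist T hT δ hδ
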